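/- Let T be a triangulated category and M a rigid object. If Y → Z → X →w ΣY is a triangle in T with X, Y ∈ pr(M) and w factoring through an object of add(ΣM), then Z ∈ pr(M), where pr(M) is the full subcategory of objects admitting a triangle M⁻¹ → M⁰ → X → ΣM⁻¹ with M⁻¹, M⁰ ∈ add(M). In other words, pr(M) is closed under [ΣM]-extensions. -/

import Mathlib

/-! Write the presentations of `X` and `Y` as `M₁ ⟶ M₀ ⟶b X ⟶c M₁⟦1⟧` and
`N₁ ⟶ N₀ ⟶b' Y ⟶c' N₁⟦1⟧`. Rigidity turns the factorisation of `w` through `add (ΣM)` into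
`w = e ≫ b'⟦1⟧`, so `b ≫ w = 0` and `w ≫ c'⟦1⟧ = 0`: hence `b` lifts to `β : M₀ ⟶ Z` and `c'`
extends along `u` to `γ : Z ⟶ N₁⟦1⟧`. Complete `ρ = (v ≫ c, γ) : Z ⟶ (M₁ ⊞ N₁)⟦1⟧` to a
triangle `M₁ ⊞ N₁ ⟶ P ⟶ Z ⟶ (M₁ ⊞ N₁)⟦1⟧`. A diagram chase through the three triangles shows
that `(β, b' ≫ u) : M₀ ⊞ N₀ ⟶ Z` is a weak kernel of `ρ`, which makes `P` a retract of
`(M₀ ⊞ N₀) ⊞ (M₁ ⊞ N₁)`. -/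

open CategoryTheory CategoryTheory.Limits CategoryTheory.Pretriangulated

universe v u

variable {C : Type u} [Category.{v} C] [Preadditive C] [HasZeroObject C]
  [HasShift C ℤ] [∀ n : ℤ, (shiftFunctor C n).Additive] [Pretriangulated C]
  [HasFiniteBiproducts C]

/-- `X` belongs to `add M`: it is a direct summand of a finite direct sum of copies of `M`. -/
def InAdd (M X : C) : Prop :=
  ∃ (n : ℕ) (i : X ⟶ ⨁ (fun _ : Fin n => M)) (p : (⨁ (fun _ : Fin n => M)) ⟶ X),
    i ≫ p = 𝟙 X

/-- A morphism `w : X ⟶ ΣY` factors through an object of `add (ΣM)`. -/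
def FactorsThroughAddShift (M : C) {X Y : C} (w : X ⟶ Y⟦(1 : ℤ)⟧) : Prop :=
  ∃ (Z : C), InAdd M Z ∧ ∃ (f : X ⟶ Z⟦(1 : ℤ)⟧) (g : Z⟦(1 : ℤ)⟧ ⟶ Y⟦(1 : ℤ)⟧),
    w = f ≫ g

/-- `X` is finitely presented by `M`: there is a triangle `M⁻¹ → M⁰ → X → ΣM⁻¹`
with `M⁻¹, M⁰ ∈ add M`. -/
def Pr (M X : C) : Prop :=
  ∃ (Mm1 M0 : C), InAdd M Mm1 ∧ InAdd M M0 ∧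
    ∃ (a : Mm1 ⟶ M0) (b : M0 ⟶ X) (c : X ⟶ Mm1⟦(1 : ℤ)⟧),
      Triangle.mk a b c ∈ distTriang C

section AdditiveClosure

variable {𝒞 : Type*} [Category 𝒞] [Preadditive 𝒞] [HasFiniteBiproducts 𝒞]

lemma InAdd.of_retract {M P Q : 𝒞} (h : Retract P Q) (hQ : InAdd M Q) : InAdd M P := by
  obtain ⟨n, i, p, hip⟩ := hQ
  exact ⟨n, h.i ≫ i, p ≫ h.r, by simp [reassoc_of% hip]⟩

lemma inAdd_of_retract_biproduct {M P : 𝒞} {ι : Type*} [Finite ι]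
    (h : Retract P (⨁ fun _ : ι => M)) : InAdd M P := by
  have := Fintype.ofFinite ι
  let r := h.trans
    (biproduct.whiskerEquiv (Fintype.equivFin ι) (g := fun _ => M) fun _ => Iso.refl M).retract
  exact ⟨_, r.i, r.r, r.retract⟩

section Binary

variable [HasBinaryBiproducts 𝒞]

noncomputable def Retract.biprod {X₁ X₂ Y₁ Y₂ : 𝒞} (h₁ : Retract X₁ Y₁) (h₂ : Retract X₂ Y₂) :
    Retract (X₁ ⊞ X₂) (Y₁ ⊞ Y₂) where
  i := biprod.map h₁.i h₂.i
  r := biprod.map h₁.r h₂.r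

noncomputable def biprodRetractBiproductSum {ι κ : Type*} [Finite ι] [Finite κ]
    (f : ι ⊕ κ → 𝒞) :
    Retract ((⨁ fun i => f (Sum.inl i)) ⊞ (⨁ fun j => f (Sum.inr j))) (⨁ f) where
  i := biprod.desc (biproduct.desc fun i => biproduct.ι f (Sum.inl i))
    (biproduct.desc fun j => biproduct.ι f (Sum.inr j))
  r := biprod.lift (biproduct.lift fun i => biproduct.π f (Sum.inl i))
    (biproduct.lift fun j => biproduct.π f (Sum.inr j))
  retract := by
    ext i j
    · obtain rfl | h := eq_or_ne i j <;> simp [*]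
    · simp
    · simp
    · obtain rfl | h := eq_or_ne i j <;> simp [*]

lemma InAdd.biprod {M P Q : 𝒞} (hP : InAdd M P) (hQ : InAdd M Q) : InAdd M (P ⊞ Q) := by
  obtain ⟨n, iP, pP, hP⟩ := hP
  obtain ⟨m, iQ, pQ, hQ⟩ := hQ
  exact inAdd_of_retract_biproduct <| (Retract.biprod ⟨iP, pP, hP⟩ ⟨iQ, pQ, hQ⟩).trans
    (biprodRetractBiproductSum fun _ : Fin n ⊕ Fin m => M)

end Binary

lemma InAdd.eq_zero_of_forall_eq_zero_left {M P Q : 𝒞} (hP : InAdd M P)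
    (h : ∀ g : M ⟶ Q, g = 0) (f : P ⟶ Q) : f = 0 := by
  obtain ⟨n, i, p, hip⟩ := hP
  have : p ≫ f = 0 := biproduct.hom_ext' _ _ fun j => by simp [h]
  rw [← Category.id_comp f, ← hip, Category.assoc, this, comp_zero]

lemma InAdd.eq_zero_of_forall_eq_zero_right {𝒟 : Type*} [Category 𝒟] [Preadditive 𝒟]
    (F : 𝒞 ⥤ 𝒟) [F.Additive] {M P : 𝒞} {Q : 𝒟} (hP : InAdd M P)
    (h : ∀ g : Q ⟶ F.obj M, g = 0) (f : Q ⟶ F.obj P) : f = 0 := by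
  obtain ⟨n, i, p, hip⟩ := hP
  have : f ≫ F.map i = 0 := by
    rw [← cancel_mono (F.mapBiproduct _).hom, zero_comp]
    exact biproduct.hom_ext _ _ fun j => by simp [h]
  rw [← Category.comp_id f, ← F.map_id, ← hip, F.map_comp, reassoc_of% this, zero_comp]

lemma InAdd.shift_hom_eq_zero [HasShift 𝒞 ℤ] [(shiftFunctor 𝒞 (1 : ℤ)).Additive] {M P Q : 𝒞}
    (hM : ∀ f : M ⟶ M⟦(1 : ℤ)⟧, f = 0) (hP : InAdd M P) (hQ : InAdd M Q)
    (f : P ⟶ Q⟦(1 : ℤ)⟧) : f = 0 :=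
  hQ.eq_zero_of_forall_eq_zero_right _ (hP.eq_zero_of_forall_eq_zero_left hM) f

end AdditiveClosure

section Triangulated

variable {𝒞 : Type*} [Category 𝒞] [Preadditive 𝒞] [HasZeroObject 𝒞] [HasShift 𝒞 ℤ]
  [∀ n : ℤ, (shiftFunctor 𝒞 n).Additive] [Pretriangulated 𝒞]

lemma CategoryTheory.Pretriangulated.yoneda_exact₁ (T : Triangle 𝒞) (hT : T ∈ distTriang 𝒞)
    {X : 𝒞} (f : T.obj₁ ⟶ X) (hf : T.mor₃ ≫ f⟦(1 : ℤ)⟧' = 0) :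
    ∃ g : T.obj₂ ⟶ X, f = T.mor₁ ≫ g := by
  refine Triangle.yoneda_exact₂ _ (inv_rot_of_distTriang _ hT) f ?_
  have := (shiftFunctorCompIsoId 𝒞 (1 : ℤ) (-1) (by omega)).hom.naturality f
  dsimp at this
  change (-(T.mor₃⟦(-1 : ℤ)⟧') ≫ (shiftFunctorCompIsoId 𝒞 (1 : ℤ) (-1) (by omega)).hom.app _) ≫
    f = 0
  rw [Preadditive.neg_comp, Category.assoc, ← this, ← Functor.map_comp_assoc, hf]
  simp

lemma nonempty_retract_biprod_of_distTriang {K P Z W : 𝒞} {q : K ⟶ P} {p : P ⟶ Z}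
    {ρ : Z ⟶ K⟦(1 : ℤ)⟧} (hT : Triangle.mk q p ρ ∈ distTriang 𝒞) {φ : W ⟶ Z} (hφ : φ ≫ ρ = 0)
    {s : P ⟶ W} (hs : s ≫ φ = p) : Nonempty (Retract P (W ⊞ K)) := by
  obtain ⟨t, rfl⟩ : ∃ t : W ⟶ P, φ = t ≫ p := Triangle.coyoneda_exact₃ _ hT φ hφ
  have hst : (s ≫ t - 𝟙 P) ≫ p = 0 := by simp [hs]
  obtain ⟨k, hk⟩ : ∃ k : P ⟶ K, s ≫ t - 𝟙 P = k ≫ q := Triangle.coyoneda_exact₂ _ hT _ hst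
  exact ⟨⟨biprod.lift s (-k), biprod.desc t q, by simp [← hk]⟩⟩

section Horseshoe

variable {X Y Z M₀ M₁ N₀ N₁ : 𝒞} {u : Y ⟶ Z} {v : Z ⟶ X} {w : X ⟶ Y⟦(1 : ℤ)⟧}
  {a : M₁ ⟶ M₀} {b : M₀ ⟶ X} {c : X ⟶ M₁⟦(1 : ℤ)⟧}
  {a' : N₁ ⟶ N₀} {b' : N₀ ⟶ Y} {c' : Y ⟶ N₁⟦(1 : ℤ)⟧} {β : M₀ ⟶ Z} {γ : Z ⟶ N₁⟦(1 : ℤ)⟧}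

lemma biprod_desc_comp_biprod_lift_eq_zero (hT : Triangle.mk u v w ∈ distTriang 𝒞)
    (hX : Triangle.mk a b c ∈ distTriang 𝒞) (hY : Triangle.mk a' b' c' ∈ distTriang 𝒞)
    (hβ : β ≫ v = b) (hγ : u ≫ γ = c') (hβγ : β ≫ γ = 0) :
    biprod.desc β (b' ≫ u) ≫ biprod.lift (v ≫ c) γ = 0 := by
  have hbc : b ≫ c = 0 := comp_distTriang_mor_zero₂₃ _ hX
  have huv : u ≫ v = 0 := comp_distTriang_mor_zero₁₂ _ hT
  have hbc' : b' ≫ c' = 0 := comp_distTriang_mor_zero₂₃ _ hY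
  ext <;> simp [reassoc_of% hβ, reassoc_of% huv, hγ, hbc, hβγ, hbc']

lemma exists_comp_biprod_desc_eq (hT : Triangle.mk u v w ∈ distTriang 𝒞)
    (hX : Triangle.mk a b c ∈ distTriang 𝒞) (hY : Triangle.mk a' b' c' ∈ distTriang 𝒞)
    (hβ : β ≫ v = b) (hγ : u ≫ γ = c') (hβγ : β ≫ γ = 0) {W : 𝒞} (g : W ⟶ Z)
    (hg : g ≫ biprod.lift (v ≫ c) γ = 0) :
    ∃ s : W ⟶ M₀ ⊞ N₀, s ≫ biprod.desc β (b' ≫ u) = g := by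
  have hgc : (g ≫ v) ≫ c = 0 := by simpa using hg =≫ biprod.fst
  have hgγ : g ≫ γ = 0 := by simpa using hg =≫ biprod.snd
  obtain ⟨j₁, hj₁⟩ : ∃ j₁ : W ⟶ M₀, g ≫ v = j₁ ≫ b := Triangle.coyoneda_exact₃ _ hX _ hgc
  have hgβ : (g - j₁ ≫ β) ≫ v = 0 := by simp [hβ, hj₁]
  obtain ⟨y, hy⟩ : ∃ y : W ⟶ Y, g - j₁ ≫ β = y ≫ u := Triangle.coyoneda_exact₂ _ hT _ hgβ
  have hyc' : y ≫ c' = 0 := by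
    rw [← hγ, ← Category.assoc, ← hy, Preadditive.sub_comp, hgγ, Category.assoc, hβγ, comp_zero,
      sub_zero]
  obtain ⟨j₂, rfl⟩ : ∃ j₂ : W ⟶ N₀, y = j₂ ≫ b' := Triangle.coyoneda_exact₃ _ hY y hyc'
  refine ⟨biprod.lift j₁ j₂, ?_⟩
  rw [biprod.lift_desc, ← Category.assoc j₂, ← hy, add_sub_cancel]

end Horseshoe

end Triangulated

lemma FactorsThroughAddShift.exists_eq_comp_shift_map {M X Y N₀ N₁ : C}
    (hM : ∀ f : M ⟶ M⟦(1 : ℤ)⟧, f = 0) {w : X ⟶ Y⟦(1 : ℤ)⟧} (hw : FactorsThroughAddShift M w)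
    {a' : N₁ ⟶ N₀} {b' : N₀ ⟶ Y} {c' : Y ⟶ N₁⟦(1 : ℤ)⟧}
    (hY : Triangle.mk a' b' c' ∈ distTriang C) (hN₁ : InAdd M N₁) :
    ∃ e : X ⟶ N₀⟦(1 : ℤ)⟧, w = e ≫ b'⟦(1 : ℤ)⟧' := by
  obtain ⟨R, hR, f, g, rfl⟩ := hw
  obtain ⟨g, rfl⟩ := (shiftFunctor C (1 : ℤ)).map_surjective g
  obtain ⟨h, rfl⟩ : ∃ h : R ⟶ N₀, g = h ≫ b' :=
    Triangle.coyoneda_exact₃ _ hY g (hR.shift_hom_eq_zero hM hN₁ _)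
  exact ⟨f ≫ h⟦(1 : ℤ)⟧', by simp⟩

/-- `pr(M)` is closed under `[ΣM]`-extensions: if `Y → Z → X →w ΣY`
is a triangle with `X, Y ∈ pr(M)` and `w` factoring through `add (ΣM)`, then `Z ∈ pr(M)`. -/
theorem stmt1 (M X Y Z : C)
    (hrigid : ∀ f : M ⟶ M⟦(1 : ℤ)⟧, f = 0)
    (hX : Pr M X) (hY : Pr M Y)
    (u : Y ⟶ Z) (v : Z ⟶ X) (w : X ⟶ Y⟦(1 : ℤ)⟧)
    (hT : Triangle.mk u v w ∈ distTriang C)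
    (hw : FactorsThroughAddShift M w) :
    Pr M Z := by
  obtain ⟨M₁, M₀, hM₁, hM₀, a, b, c, hTX⟩ := hX
  obtain ⟨N₁, N₀, hN₁, hN₀, a', b', c', hTY⟩ := hY
  obtain ⟨e, rfl⟩ := hw.exists_eq_comp_shift_map hrigid hTY hN₁
  have hbw : b ≫ e ≫ b'⟦(1 : ℤ)⟧' = 0 := by
    rw [← Category.assoc, hM₀.shift_hom_eq_zero hrigid hN₀ (b ≫ e), zero_comp]
  obtain ⟨β, hβ⟩ : ∃ β : M₀ ⟶ Z, b = β ≫ v := Triangle.coyoneda_exact₃ _ hT b hbw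
  have hbc' : b' ≫ c' = 0 := comp_distTriang_mor_zero₂₃ _ hTY
  have hwc' : (e ≫ b'⟦(1 : ℤ)⟧') ≫ c'⟦(1 : ℤ)⟧' = 0 := by
    rw [Category.assoc, ← Functor.map_comp, hbc', Functor.map_zero, comp_zero]
  obtain ⟨γ, hγ⟩ : ∃ γ : Z ⟶ N₁⟦(1 : ℤ)⟧, c' = u ≫ γ := yoneda_exact₁ _ hT c' hwc'
  have hβγ : β ≫ γ = 0 := hM₀.shift_hom_eq_zero hrigid hN₁ _
  have := preservesBinaryBiproducts_of_preservesBiproducts (shiftFunctor C (1 : ℤ))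
  let ρ := biprod.lift (v ≫ c) γ ≫ ((shiftFunctor C (1 : ℤ)).mapBiprod M₁ N₁).inv
  obtain ⟨P, q, p, hTP⟩ := distinguished_cocone_triangle₂ ρ
  have hpρ : p ≫ biprod.lift (v ≫ c) γ = 0 := by
    have : p ≫ ρ = 0 := comp_distTriang_mor_zero₂₃ _ hTP
    rwa [← Category.assoc, Preadditive.IsIso.comp_right_eq_zero] at this
  obtain ⟨s, hs⟩ := exists_comp_biprod_desc_eq hT hTX hTY hβ.symm hγ.symm hβγ p hpρ
  have hφρ : biprod.desc β (b' ≫ u) ≫ ρ = 0 := by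
    dsimp only [ρ]
    rw [reassoc_of% (biprod_desc_comp_biprod_lift_eq_zero hT hTX hTY hβ.symm hγ.symm hβγ),
      zero_comp]
  obtain ⟨r⟩ := nonempty_retract_biprod_of_distTriang hTP hφρ hs
  exact ⟨_, P, hM₁.biprod hN₁, ((hM₀.biprod hN₀).biprod (hM₁.biprod hN₁)).of_retract r, q, p, ρ,
    hTP⟩
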